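/- Every classical tripartite state is 1-bounded: if ρ_{ABC} is diagonal in a fixed product basis (i.e., a classical probability distribution p(a,b,c) with full support), then ‖Tr_C(ρ_{ABC} Ĥ_{A:C|B})‖₁ ≤ I(A:C|B). -/

import Mathlib

noncomputable section
open Matrix Finset
open scoped ComplexOrder

/-- Matrix logarithm via the spectral decomposition (junk value `0` for
non-Hermitian input). -/
def matLog {n : Type*} [Fintype n] [DecidableEq n] (ρ : Matrix n n ℂ) :
    Matrix n n ℂ :=
  if h : ρ.IsHermitian then
    (h.eigenvectorUnitary : Matrix n n ℂ) *
      Matrix.diagonal (fun i => (Real.log (h.eigenvalues i) : ℂ)) *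
      star (h.eigenvectorUnitary : Matrix n n ℂ)
  else 0

/-- von Neumann entropy `S(ρ) = -Tr(ρ log ρ)`. -/
def vnEntropy {n : Type*} [Fintype n] [DecidableEq n] (ρ : Matrix n n ℂ) : ℝ :=
  -((ρ * matLog ρ).trace.re)

/-- Trace norm `‖X‖₁ = Tr √(XᴴX)`. -/
def traceNorm {n : Type*} [Fintype n] [DecidableEq n] (X : Matrix n n ℂ) : ℝ :=
  (((Matrix.posSemidef_conjTranspose_mul_self X).1.eigenvectorUnitary : Matrix n n ℂ) *
    Matrix.diagonal (fun i => (Real.sqrt ((Matrix.posSemidef_conjTranspose_mul_self X).1.eigenvalues i) : ℂ)) *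
    star ((Matrix.posSemidef_conjTranspose_mul_self X).1.eigenvectorUnitary : Matrix n n ℂ)).trace.re

/-- Operator (spectral) norm of a matrix. -/
def opNorm {n : Type*} [Fintype n] [DecidableEq n] (X : Matrix n n ℂ) : ℝ :=
  ‖Matrix.toEuclideanCLM (𝕜 := ℂ) X‖

/-- A density matrix: positive semidefinite with unit trace. -/
def IsDensityMatrix {n : Type*} [Fintype n] [DecidableEq n]
    (ρ : Matrix n n ℂ) : Prop :=
  ρ.PosSemidef ∧ ρ.trace = 1

section Tripartite
variable {α β γ : Type*} [Fintype α] [Fintype β] [Fintype γ]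
  [DecidableEq α] [DecidableEq β] [DecidableEq γ]

/-- Partial trace over the third factor. -/
def trC (ρ : Matrix (α × β × γ) (α × β × γ) ℂ) : Matrix (α × β) (α × β) ℂ :=
  Matrix.of fun x y => ∑ c : γ, ρ (x.1, x.2, c) (y.1, y.2, c)

/-- Partial trace over the first factor. -/
def trA (ρ : Matrix (α × β × γ) (α × β × γ) ℂ) : Matrix (β × γ) (β × γ) ℂ :=
  Matrix.of fun x y => ∑ a : α, ρ (a, x.1, x.2) (a, y.1, y.2)

/-- Partial trace over the first and third factors. -/
def trAC (ρ : Matrix (α × β × γ) (α × β × γ) ℂ) : Matrix β β ℂ :=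
  Matrix.of fun x y => ∑ a : α, ∑ c : γ, ρ (a, x, c) (a, y, c)

/-- Extension of an operator on `A ⊗ B` by the identity on `C`. -/
def extAB (M : Matrix (α × β) (α × β) ℂ) :
    Matrix (α × β × γ) (α × β × γ) ℂ :=
  Matrix.of fun x y => M (x.1, x.2.1) (y.1, y.2.1) * (if x.2.2 = y.2.2 then 1 else 0)

/-- Extension of an operator on `B ⊗ C` by the identity on `A`. -/
def extBC (M : Matrix (β × γ) (β × γ) ℂ) :
    Matrix (α × β × γ) (α × β × γ) ℂ :=
  Matrix.of fun x y => (if x.1 = y.1 then 1 else 0) * M x.2 y.2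

/-- Extension of an operator on `B` by the identity on `A ⊗ C`. -/
def extB (M : Matrix β β ℂ) : Matrix (α × β × γ) (α × β × γ) ℂ :=
  Matrix.of fun x y =>
    (if x.1 = y.1 then 1 else 0) * M x.2.1 y.2.1 * (if x.2.2 = y.2.2 then 1 else 0)

/-- The conditional mutual spectrum
`Ĥ_{A:C|B} = Ĥ_AB + Ĥ_BC - Ĥ_B - Ĥ_ABC`, where `Ĥ_X = -(log ρ_X) ⊗ I`. -/
def condMutSpec (ρ : Matrix (α × β × γ) (α × β × γ) ℂ) :
    Matrix (α × β × γ) (α × β × γ) ℂ :=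
  -(extAB (matLog (trC ρ))) - extBC (matLog (trA ρ)) + extB (matLog (trAC ρ))
    + matLog ρ

/-- Conditional mutual information `I(A:C|B) = S_AB + S_BC - S_B - S_ABC`. -/
def condMutInfo (ρ : Matrix (α × β × γ) (α × β × γ) ℂ) : ℝ :=
  vnEntropy (trC ρ) + vnEntropy (trA ρ) - vnEntropy (trAC ρ) - vnEntropy ρ

end Tripartite

variable {α β γ : Type*} [Fintype α] [Fintype β] [Fintype γ]
  [DecidableEq α] [DecidableEq β] [DecidableEq γ]

/-!
For a classical state all marginals are diagonal in the product basis, so every matrix logarithm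
acts entrywise and `Ĥ_{A:C|B}` is diagonal with entries `log (p(abc) p(b) / (p(ab) p(bc)))`.
Hence `Tr_C (ρ Ĥ_{A:C|B})` is diagonal with `ab`-entry `p(ab) D(p(·|ab) ‖ p(·|b))`, which is
nonnegative by Gibbs' inequality. Its trace norm is therefore its trace, which is `I(A:C|B)`.
-/

namespace Matrix.IsHermitian

variable {𝕜 n : Type*} [RCLike 𝕜] [Fintype n] [DecidableEq n] {A : Matrix n n 𝕜}

/-- An eigenvector of a diagonal matrix is supported on the entries whose diagonal value is its
eigenvalue. -/
lemma diagonal_mul_eigenvectorUnitary (hA : A.IsHermitian) {d : n → ℝ}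
    (hd : A = diagonal fun i => (d i : 𝕜)) (f : ℝ → ℝ) :
    diagonal (fun i => (f (d i) : 𝕜)) * (hA.eigenvectorUnitary : Matrix n n 𝕜)
      = (hA.eigenvectorUnitary : Matrix n n 𝕜) * diagonal fun j => (f (hA.eigenvalues j) : 𝕜) := by
  subst hd
  ext i j
  have heig := congrFun (hA.mulVec_eigenvectorBasis j) i
  simp only [mulVec_diagonal, Pi.smul_apply, RCLike.real_smul_eq_coe_mul] at heig
  simp only [diagonal_mul, mul_diagonal, eigenvectorUnitary_apply]
  by_cases h : d i = hA.eigenvalues j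
  · rw [h, mul_comm]
  · have hzero : (hA.eigenvectorBasis j : n → 𝕜) i = 0 := by
      rw [← sub_eq_zero, ← sub_mul] at heig
      exact (mul_eq_zero.mp heig).resolve_left (sub_ne_zero.mpr (by exact_mod_cast h))
    simp [hzero]

lemma eigenvectorUnitary_conj_eq_diagonal (hA : A.IsHermitian) {d : n → ℝ}
    (hd : A = diagonal fun i => (d i : 𝕜)) (f : ℝ → ℝ) :
    (hA.eigenvectorUnitary : Matrix n n 𝕜) * diagonal (fun j => (f (hA.eigenvalues j) : 𝕜))
        * star (hA.eigenvectorUnitary : Matrix n n 𝕜)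
      = diagonal fun i => (f (d i) : 𝕜) := by
  rw [← hA.diagonal_mul_eigenvectorUnitary hd, mul_assoc,
    Unitary.mul_star_self_of_mem hA.eigenvectorUnitary.2, mul_one]

end Matrix.IsHermitian

section DiagonalMatrices

variable {n : Type*} [Fintype n] [DecidableEq n]

omit [Fintype n] in
lemma isHermitian_diagonal_ofReal (d : n → ℝ) :
    (diagonal fun i => (d i : ℂ)).IsHermitian :=
  isHermitian_diagonal_iff.mpr fun i => Complex.conj_ofReal (d i)

lemma matLog_diagonal (d : n → ℝ) :
    matLog (diagonal fun i => (d i : ℂ)) = diagonal fun i => (Real.log (d i) : ℂ) := by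
  rw [matLog, dif_pos (isHermitian_diagonal_ofReal d)]
  exact (isHermitian_diagonal_ofReal d).eigenvectorUnitary_conj_eq_diagonal rfl Real.log

lemma vnEntropy_diagonal (d : n → ℝ) :
    vnEntropy (diagonal fun i => (d i : ℂ)) = -∑ i, d i * Real.log (d i) := by
  simp [vnEntropy, matLog_diagonal, trace_diagonal]

lemma traceNorm_diagonal (q : n → ℝ) :
    traceNorm (diagonal fun i => (q i : ℂ)) = ∑ i, |q i| := by
  have hsq : (diagonal fun i => (q i : ℂ))ᴴ * diagonal (fun i => (q i : ℂ))
      = diagonal fun i => ((q i ^ 2 : ℝ) : ℂ) := by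
    simp [diagonal_conjTranspose, diagonal_mul_diagonal, Complex.conj_ofReal, sq]
  -- `congrArg` rather than `rw`: the coercion `ℝ → ℂ` of the general lemma is `RCLike.ofReal`,
  -- which is `Complex.ofReal` only up to unfolding.
  calc traceNorm (diagonal fun i => (q i : ℂ))
      = (diagonal fun i => (Real.sqrt (q i ^ 2) : ℂ)).trace.re :=
        congrArg (fun M => M.trace.re)
          ((posSemidef_conjTranspose_mul_self _).1.eigenvectorUnitary_conj_eq_diagonal hsq _)
    _ = ∑ i, |q i| := by simp [trace_diagonal, Real.sqrt_sq_eq_abs]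

end DiagonalMatrices

omit [Fintype α] [Fintype β] in
lemma trC_diagonal (f : α × β × γ → ℂ) :
    trC (diagonal f) = diagonal fun y => ∑ c : γ, f (y.1, y.2, c) := by
  ext ⟨a, b⟩ ⟨a', b'⟩
  by_cases h : (a, b) = (a', b') <;> simp_all [trC, diagonal_apply]

omit [Fintype β] [Fintype γ] in
lemma trA_diagonal (f : α × β × γ → ℂ) :
    trA (diagonal f) = diagonal fun y => ∑ a : α, f (a, y.1, y.2) := by
  ext ⟨b, c⟩ ⟨b', c'⟩
  by_cases h : (b, c) = (b', c') <;> simp_all [trA, diagonal_apply]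

omit [Fintype β] in
lemma trAC_diagonal (f : α × β × γ → ℂ) :
    trAC (diagonal f) = diagonal fun b => ∑ a : α, ∑ c : γ, f (a, b, c) := by
  ext b b'
  by_cases h : b = b' <;> simp_all [trAC, diagonal_apply]

omit [Fintype α] [Fintype β] [Fintype γ] in
lemma extAB_diagonal (f : α × β → ℂ) :
    extAB (γ := γ) (diagonal f) = diagonal fun x => f (x.1, x.2.1) := by
  ext ⟨a, b, c⟩ ⟨a', b', c'⟩
  simp only [extAB, of_apply, diagonal_apply, Prod.mk.injEq]
  split_ifs <;> simp_all

omit [Fintype α] [Fintype β] [Fintype γ] in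
lemma extBC_diagonal (f : β × γ → ℂ) :
    extBC (α := α) (diagonal f) = diagonal fun x => f x.2 := by
  ext ⟨a, b, c⟩ ⟨a', b', c'⟩
  simp only [extBC, of_apply, diagonal_apply, Prod.mk.injEq]
  split_ifs <;> simp_all

omit [Fintype α] [Fintype β] [Fintype γ] in
lemma extB_diagonal (f : β → ℂ) :
    extB (α := α) (γ := γ) (diagonal f) = diagonal fun x => f x.2.1 := by
  ext ⟨a, b, c⟩ ⟨a', b', c'⟩
  simp only [extB, of_apply, diagonal_apply, Prod.mk.injEq]
  split_ifs <;> simp_all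

lemma sum_mul_log_div_nonneg {ι : Type*} {s : Finset ι} {w q : ι → ℝ}
    (hw : ∀ i ∈ s, 0 < w i) (hq : ∀ i ∈ s, 0 < q i) (hsum : ∑ i ∈ s, q i ≤ ∑ i ∈ s, w i) :
    0 ≤ ∑ i ∈ s, w i * Real.log (w i / q i) :=
  calc (0 : ℝ) ≤ ∑ i ∈ s, (w i - q i) := by rw [sum_sub_distrib]; linarith
    _ ≤ ∑ i ∈ s, w i * Real.log (w i / q i) := sum_le_sum fun i hi => by
      have hlog := Real.one_sub_inv_le_log_of_pos (div_pos (hw i hi) (hq i hi))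
      calc w i - q i = w i * (1 - (w i / q i)⁻¹) := by field_simp [(hw i hi).ne']
        _ ≤ w i * Real.log (w i / q i) := mul_le_mul_of_nonneg_left hlog (hw i hi).le

section ClassicalState

variable (p : α × β × γ → ℝ)

def margAB (y : α × β) : ℝ := ∑ c, p (y.1, y.2, c)

def margBC (y : β × γ) : ℝ := ∑ a, p (a, y.1, y.2)

def margB (b : β) : ℝ := ∑ a, ∑ c, p (a, b, c)

/-- `log (p(abc) p(b) / (p(ab) p(bc)))`, split into four logarithms so that no positivity is
needed to compute with it. -/
def classicalCondMutSpec (x : α × β × γ) : ℝ :=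
  Real.log (p x) + Real.log (margB p x.2.1) - Real.log (margAB p (x.1, x.2.1))
    - Real.log (margBC p x.2)

omit [DecidableEq α] [DecidableEq β] [DecidableEq γ] in
lemma sum_margAB : ∑ y, margAB p y = ∑ x, p x := by
  simp only [margAB, Fintype.sum_prod_type]

omit [DecidableEq α] [DecidableEq β] [DecidableEq γ] in
lemma sum_margAB_mul (g : α × β → ℝ) :
    ∑ y, margAB p y * g y = ∑ x, p x * g (x.1, x.2.1) := by
  simp only [margAB, sum_mul, Fintype.sum_prod_type]

omit [DecidableEq α] [DecidableEq β] [DecidableEq γ] in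
lemma sum_margBC_mul (g : β × γ → ℝ) :
    ∑ y, margBC p y * g y = ∑ x, p x * g x.2 := by
  rw [eq_comm, Fintype.sum_prod_type, sum_comm]
  simp only [margBC, sum_mul]

omit [DecidableEq α] [DecidableEq β] [DecidableEq γ] in
lemma sum_margB_mul (g : β → ℝ) :
    ∑ b, margB p b * g b = ∑ x, p x * g x.2.1 := by
  simp only [margB, sum_mul, Fintype.sum_prod_type]
  exact sum_comm

omit [Fintype α] [Fintype β] [DecidableEq α] [DecidableEq β] [DecidableEq γ] in
lemma margAB_pos [Nonempty γ] {p : α × β × γ → ℝ} (hp : ∀ x, 0 < p x) (y : α × β) :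
    0 < margAB p y :=
  sum_pos (fun _ _ => hp _) univ_nonempty

omit [Fintype β] [Fintype γ] [DecidableEq α] [DecidableEq β] [DecidableEq γ] in
lemma margBC_pos [Nonempty α] {p : α × β × γ → ℝ} (hp : ∀ x, 0 < p x) (y : β × γ) :
    0 < margBC p y :=
  sum_pos (fun _ _ => hp _) univ_nonempty

omit [Fintype β] [DecidableEq α] [DecidableEq β] [DecidableEq γ] in
lemma margB_pos [Nonempty α] [Nonempty γ] {p : α × β × γ → ℝ} (hp : ∀ x, 0 < p x) (b : β) :
    0 < margB p b :=
  sum_pos (fun _ _ => sum_pos (fun _ _ => hp _) univ_nonempty) univ_nonempty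

omit [Fintype β] [DecidableEq α] [DecidableEq β] [DecidableEq γ] in
lemma sum_margBC (b : β) : ∑ c, margBC p (b, c) = margB p b :=
  sum_comm

omit [Fintype β] [DecidableEq α] [DecidableEq β] [DecidableEq γ] in
/-- For fixed `a b`, the sum is `p(ab)` times the relative entropy of `p(c|ab)` to `p(c|b)`. -/
lemma margAB_mul_classicalCondMutSpec_nonneg {p : α × β × γ → ℝ} (hp : ∀ x, 0 < p x)
    (y : α × β) : 0 ≤ margAB (fun x => p x * classicalCondMutSpec p x) y := by
  obtain ⟨a, b⟩ := y
  rcases isEmpty_or_nonempty γ with hγ | hγ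
  · simp [margAB]
  have : Nonempty α := ⟨a⟩
  set q : γ → ℝ := fun c => margAB p (a, b) * margBC p (b, c) / margB p b
  have hterm : ∀ c, p (a, b, c) * classicalCondMutSpec p (a, b, c)
      = p (a, b, c) * Real.log (p (a, b, c) / q c) := fun c => by
    have hAB := margAB_pos hp (a, b)
    have hBC := margBC_pos hp (b, c)
    have hB := margB_pos hp b
    have hABC := hp (a, b, c)
    rw [Real.log_div (by positivity) (by positivity), Real.log_div (by positivity) (by positivity),
      Real.log_mul (by positivity) (by positivity), classicalCondMutSpec]
    ring
  have hq_sum : ∑ c, q c = ∑ c, p (a, b, c) := by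
    simp only [q, mul_div_right_comm, ← mul_sum, sum_margBC,
      div_mul_cancel₀ _ (margB_pos hp b).ne', margAB]
  simp only [margAB, hterm]
  exact sum_mul_log_div_nonneg (fun c _ => hp _)
    (fun c _ => div_pos (mul_pos (margAB_pos hp _) (margBC_pos hp _)) (margB_pos hp b))
    hq_sum.le

omit [Fintype α] [Fintype β] in
lemma trC_diagonal_ofReal :
    trC (diagonal fun x => (p x : ℂ)) = diagonal fun y => (margAB p y : ℂ) := by
  simp [trC_diagonal, margAB]

omit [Fintype β] [Fintype γ] in
lemma trA_diagonal_ofReal :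
    trA (diagonal fun x => (p x : ℂ)) = diagonal fun y => (margBC p y : ℂ) := by
  simp [trA_diagonal, margBC]

omit [Fintype β] in
lemma trAC_diagonal_ofReal :
    trAC (diagonal fun x => (p x : ℂ)) = diagonal fun b => (margB p b : ℂ) := by
  simp [trAC_diagonal, margB]

lemma condMutSpec_diagonal :
    condMutSpec (diagonal fun x => (p x : ℂ))
      = diagonal fun x => (classicalCondMutSpec p x : ℂ) := by
  rw [condMutSpec, trC_diagonal_ofReal, trA_diagonal_ofReal, trAC_diagonal_ofReal,
    matLog_diagonal, matLog_diagonal, matLog_diagonal, matLog_diagonal, extAB_diagonal,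
    extBC_diagonal, extB_diagonal, diagonal_neg, diagonal_sub, diagonal_add, diagonal_add]
  congr 1
  funext x
  push_cast [classicalCondMutSpec]
  ring

lemma condMutInfo_diagonal :
    condMutInfo (diagonal fun x => (p x : ℂ)) = ∑ x, p x * classicalCondMutSpec p x := by
  rw [condMutInfo, trC_diagonal_ofReal, trA_diagonal_ofReal, trAC_diagonal_ofReal,
    vnEntropy_diagonal, vnEntropy_diagonal, vnEntropy_diagonal, vnEntropy_diagonal,
    sum_margAB_mul, sum_margBC_mul, sum_margB_mul]
  simp only [classicalCondMutSpec, mul_add, mul_sub, sum_add_distrib, sum_sub_distrib]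
  ring

lemma trC_diagonal_mul_condMutSpec :
    trC (diagonal (fun x => (p x : ℂ)) * condMutSpec (diagonal fun x => (p x : ℂ)))
      = diagonal fun y => (margAB (fun x => p x * classicalCondMutSpec p x) y : ℂ) := by
  rw [condMutSpec_diagonal, diagonal_mul_diagonal]
  simp_rw [← Complex.ofReal_mul]
  exact trC_diagonal_ofReal _

end ClassicalState

theorem classical_state_one_bounded_general
    (p : α × β × γ → ℝ) (hpos : ∀ x, 0 < p x)
    (ρ : Matrix (α × β × γ) (α × β × γ) ℂ)
    (hρ : ρ = Matrix.diagonal (fun x => (p x : ℂ))) :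
    traceNorm (trC (ρ * condMutSpec ρ)) ≤ condMutInfo ρ := by
  subst hρ
  rw [trC_diagonal_mul_condMutSpec, traceNorm_diagonal, condMutInfo_diagonal, ← sum_margAB]
  exact (sum_congr rfl fun y _ =>
    abs_of_nonneg (margAB_mul_classicalCondMutSpec_nonneg hpos y)).le

/-- every classical (diagonal, fully supported) tripartite state
is `1`-bounded. -/
theorem classical_state_one_bounded
    (p : α × β × γ → ℝ) (hpos : ∀ x, 0 < p x) (hsum : ∑ x : α × β × γ, p x = 1)
    (ρ : Matrix (α × β × γ) (α × β × γ) ℂ)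
    (hρ : ρ = Matrix.diagonal (fun x => (p x : ℂ))) :
    traceNorm (trC (ρ * condMutSpec ρ)) ≤ condMutInfo ρ :=
  classical_state_one_bounded_general p hpos ρ hρ

end
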